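/- Let a : ℤ → ℝ be not identically zero and satisfy |a_k| ≤ c λ^{|k|} for all k ∈ ℤ, for some c > 0 and 0 < λ < 1. Define φ₃(x) = Σ_{k∈ℤ} a_k N₃(x − k), where N₃ is the quadratic B-spline, and set σ₃²(t) = Σ_{k∈ℤ} φ₃²(t − k). Then σ₃² attains its absolute maximum over ℝ exactly at the half-integer points t = l + 1/2, l ∈ ℤ, and the maximal value is σ₃²(l + 1/2) = M/32 + (1/4) Σ_{k∈ℤ} (a_k + a_{k−1})², where M = Σ_{k∈ℤ} (a_k − a_{k−1})² − Σ_{k∈ℤ} (a_k − a_{k−1})(a_{k−1} − a_{k−2}). -/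

import Mathlib

noncomputable section

/-- The quadratic B-spline `N₃`. -/
def N3 (x : ℝ) : ℝ :=
  if 0 ≤ x ∧ x < 1 then x ^ 2 / 2
  else if 1 ≤ x ∧ x < 2 then 3 / 4 - (x - 3 / 2) ^ 2
  else if 2 ≤ x ∧ x ≤ 3 then (3 - x) ^ 2 / 2
  else 0

/-- `φ₃ = Σ_k a_k N₃(· − k)`. -/
def phi3 (a : ℤ → ℝ) (x : ℝ) : ℝ := ∑' k : ℤ, a k * N3 (x - k)

/-- The variance function `σ₃²(t) = Σ_k φ₃²(t − k)`. -/
def sigma3sq (a : ℤ → ℝ) (t : ℝ) : ℝ := ∑' k : ℤ, (phi3 a (t - k)) ^ 2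

section Bspline

lemma N3_zero_of_neg {x : ℝ} (h : x < 0) : N3 x = 0 := by
  unfold N3
  rw [if_neg (by rintro ⟨h1', h2'⟩; linarith),
    if_neg (by rintro ⟨h1', h2'⟩; linarith),
    if_neg (by rintro ⟨h1', h2'⟩; linarith)]

lemma N3_zero_of_ge {x : ℝ} (h : 3 ≤ x) : N3 x = 0 := by
  unfold N3
  rw [if_neg (by rintro ⟨h1', h2'⟩; linarith),
    if_neg (by rintro ⟨h1', h2'⟩; linarith)]
  split_ifs with h3
  · have : x = 3 := le_antisymm h3.2 h
    rw [this]; norm_num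
  · rfl

lemma N3_val0 {u : ℝ} (h0 : 0 ≤ u) (h1 : u < 1) : N3 u = u ^ 2 / 2 := by
  unfold N3; rw [if_pos ⟨h0, h1⟩]

lemma N3_val1 {u : ℝ} (h0 : 0 ≤ u) (h1 : u < 1) :
    N3 (u + 1) = 3 / 4 - (u - 1 / 2) ^ 2 := by
  unfold N3
  rw [if_neg (by rintro ⟨h1', h2'⟩; linarith),
    if_pos ⟨by linarith, by linarith⟩]
  ring

lemma N3_val2 {u : ℝ} (h0 : 0 ≤ u) (h1 : u < 1) :
    N3 (u + 2) = (1 - u) ^ 2 / 2 := by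
  unfold N3
  rw [if_neg (by rintro ⟨h1', h2'⟩; linarith),
    if_neg (by rintro ⟨h1', h2'⟩; linarith),
    if_pos ⟨by linarith, by linarith⟩]
  ring

lemma phi3_eq (a : ℤ → ℝ) (n : ℤ) (u : ℝ) (h0 : 0 ≤ u) (h1 : u < 1) :
    phi3 a ((n : ℝ) + u) = a n * N3 u + a (n - 1) * N3 (u + 1) + a (n - 2) * N3 (u + 2) := by
  unfold phi3
  rw [tsum_eq_sum (s := {n - 2, n - 1, n}) ?_]
  · rw [Finset.sum_insert (by intro hmem; simp only [Finset.mem_insert, Finset.mem_singleton] at hmem; omega),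
      Finset.sum_insert (by intro hmem; simp only [Finset.mem_insert, Finset.mem_singleton] at hmem; omega),
      Finset.sum_singleton]
    rw [show (n : ℝ) + u - ((n - 2 : ℤ) : ℝ) = u + 2 by push_cast; ring,
      show (n : ℝ) + u - ((n - 1 : ℤ) : ℝ) = u + 1 by push_cast; ring,
      show (n : ℝ) + u - (n : ℝ) = u by ring]
    ring
  · intro k hk
    simp only [Finset.mem_insert, Finset.mem_singleton] at hk
    push_neg at hk
    rcases (by omega : k ≤ n - 3 ∨ n + 1 ≤ k) with h | h
    · have hk' : (k : ℝ) ≤ (n : ℝ) - 3 := by exact_mod_cast h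
      rw [N3_zero_of_ge (by linarith), mul_zero]
    · have hk' : (n : ℝ) + 1 ≤ (k : ℝ) := by exact_mod_cast h
      rw [N3_zero_of_neg (by linarith), mul_zero]

lemma sigma3_eq (a : ℤ → ℝ) (t : ℝ) :
    sigma3sq a t = ∑' j : ℤ, (a j * N3 (Int.fract t) + a (j - 1) * N3 (Int.fract t + 1)
      + a (j - 2) * N3 (Int.fract t + 2)) ^ 2 := by
  unfold sigma3sq
  have h1 : ∀ k : ℤ, phi3 a (t - k) =
      a (⌊t⌋ - k) * N3 (Int.fract t) + a (⌊t⌋ - k - 1) * N3 (Int.fract t + 1)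
        + a (⌊t⌋ - k - 2) * N3 (Int.fract t + 2) := by
    intro k
    have harg : t - (k : ℝ) = ((⌊t⌋ - k : ℤ) : ℝ) + Int.fract t := by
      rw [Int.fract]; push_cast; ring
    rw [harg]
    exact phi3_eq a (⌊t⌋ - k) (Int.fract t) (Int.fract_nonneg t) (Int.fract_lt_one t)
  calc ∑' k : ℤ, (phi3 a (t - k)) ^ 2
      = ∑' k : ℤ, (a (⌊t⌋ - k) * N3 (Int.fract t) + a (⌊t⌋ - k - 1) * N3 (Int.fract t + 1)
        + a (⌊t⌋ - k - 2) * N3 (Int.fract t + 2)) ^ 2 := tsum_congr fun k => by rw [h1 k]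
    _ = _ := (Equiv.subLeft ⌊t⌋).tsum_eq fun j => (a j * N3 (Int.fract t)
        + a (j - 1) * N3 (Int.fract t + 1) + a (j - 2) * N3 (Int.fract t + 2)) ^ 2

end Bspline

section Series

def Sz (a : ℤ → ℝ) : ℝ := ∑' k : ℤ, a k * a k
def So (a : ℤ → ℝ) : ℝ := ∑' k : ℤ, a k * a (k - 1)
def St (a : ℤ → ℝ) : ℝ := ∑' k : ℤ, a k * a (k - 2)

lemma tsum_shift' (f : ℤ → ℝ) (m : ℤ) : ∑' k : ℤ, f (k - m) = ∑' k : ℤ, f k :=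
  (Equiv.subRight m).tsum_eq f

lemma T11 (a : ℤ → ℝ) : ∑' k : ℤ, a (k - 1) * a (k - 1) = Sz a :=
  tsum_shift' (fun k => a k * a k) 1

lemma T22 (a : ℤ → ℝ) : ∑' k : ℤ, a (k - 2) * a (k - 2) = Sz a :=
  tsum_shift' (fun k => a k * a k) 2

lemma T12 (a : ℤ → ℝ) : ∑' k : ℤ, a (k - 1) * a (k - 2) = So a := by
  have h2 : ∑' k : ℤ, a (k - 1) * a (k - 2) = ∑' k : ℤ, a (k - 1) * a (k - 1 - 1) :=
    tsum_congr fun k => by rw [show k - 1 - 1 = k - 2 by ring]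
  rw [h2]
  exact tsum_shift' (fun k => a k * a (k - 1)) 1

lemma tsum_comb3 (f g h : ℤ → ℝ) (hf : Summable f) (hg : Summable g) (hh : Summable h)
    (x y z : ℝ) :
    ∑' k : ℤ, (x * f k + (y * g k + z * h k))
      = x * (∑' k, f k) + (y * (∑' k, g k) + z * (∑' k, h k)) := by
  rw [Summable.tsum_add (hf.mul_left x) ((hg.mul_left y).add (hh.mul_left z)),
    Summable.tsum_add (hg.mul_left y) (hh.mul_left z), tsum_mul_left, tsum_mul_left, tsum_mul_left]

lemma tsum_comb6 (f1 f2 f3 f4 f5 f6 : ℤ → ℝ) (h1 : Summable f1) (h2 : Summable f2)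
    (h3 : Summable f3) (h4 : Summable f4) (h5 : Summable f5) (h6 : Summable f6)
    (x1 x2 x3 x4 x5 x6 : ℝ) :
    ∑' k : ℤ, (x1 * f1 k + (x2 * f2 k + (x3 * f3 k + (x4 * f4 k + (x5 * f5 k + x6 * f6 k)))))
      = x1 * (∑' k, f1 k) + (x2 * (∑' k, f2 k) + (x3 * (∑' k, f3 k)
        + (x4 * (∑' k, f4 k) + (x5 * (∑' k, f5 k) + x6 * (∑' k, f6 k))))) := by
  rw [Summable.tsum_add (h1.mul_left x1) ((h2.mul_left x2).add ((h3.mul_left x3).add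
      ((h4.mul_left x4).add ((h5.mul_left x5).add (h6.mul_left x6))))),
    Summable.tsum_add (h2.mul_left x2) ((h3.mul_left x3).add ((h4.mul_left x4).add
      ((h5.mul_left x5).add (h6.mul_left x6)))),
    Summable.tsum_add (h3.mul_left x3) ((h4.mul_left x4).add ((h5.mul_left x5).add (h6.mul_left x6))),
    Summable.tsum_add (h4.mul_left x4) ((h5.mul_left x5).add (h6.mul_left x6)),
    Summable.tsum_add (h5.mul_left x5) (h6.mul_left x6),
    tsum_mul_left, tsum_mul_left, tsum_mul_left, tsum_mul_left, tsum_mul_left, tsum_mul_left]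

variable {a : ℤ → ℝ} {c lam : ℝ}

lemma summable_geom_int' {lam : ℝ} (h0 : 0 ≤ lam) (h1 : lam < 1) :
    Summable (fun k : ℤ => lam ^ k.natAbs) := by
  apply Summable.of_nat_of_neg
  · simpa using summable_geometric_of_lt_one h0 h1
  · simpa using summable_geometric_of_lt_one h0 h1

lemma summable_a (hc : 0 < c) (hl0 : 0 < lam) (hl1 : lam < 1)
    (hd : ∀ k : ℤ, |a k| ≤ c * lam ^ k.natAbs) : Summable a := by
  apply Summable.of_abs
  exact Summable.of_nonneg_of_le (fun k => abs_nonneg _) hd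
    (((summable_geom_int' hl0.le hl1).mul_left c))

lemma summable_prod (hc : 0 < c) (hl0 : 0 < lam) (hl1 : lam < 1)
    (hd : ∀ k : ℤ, |a k| ≤ c * lam ^ k.natAbs) (m₁ m₂ : ℤ) :
    Summable (fun k : ℤ => a (k - m₁) * a (k - m₂)) := by
  apply Summable.of_abs
  have hbig : Summable (fun k : ℤ => (c * lam ^ (k - m₁).natAbs) * c) := by
    have : Summable (fun k : ℤ => (c * lam ^ k.natAbs) * c) :=
      ((summable_geom_int' hl0.le hl1).mul_left c).mul_right c
    exact (Equiv.subRight m₁).summable_iff.mpr this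
  apply Summable.of_nonneg_of_le (fun k => abs_nonneg _) (fun k => ?_) hbig
  rw [abs_mul]
  apply mul_le_mul (hd _) ((hd _).trans ?_) (abs_nonneg _) (by positivity)
  calc c * lam ^ (k - m₂).natAbs ≤ c * 1 := by
        apply mul_le_mul_of_nonneg_left (pow_le_one₀ hl0.le hl1.le) hc.le
    _ = c := mul_one c

variable (hc : 0 < c) (hl0 : 0 < lam) (hl1 : lam < 1)
  (hd : ∀ k : ℤ, |a k| ≤ c * lam ^ k.natAbs)

include hc hl0 hl1 hd

lemma S00 : Summable (fun k : ℤ => a k * a k) := by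
  simpa using summable_prod hc hl0 hl1 hd 0 0

lemma S01 : Summable (fun k : ℤ => a k * a (k - 1)) := by
  simpa using summable_prod hc hl0 hl1 hd 0 1

lemma S02 : Summable (fun k : ℤ => a k * a (k - 2)) := by
  simpa using summable_prod hc hl0 hl1 hd 0 2

lemma S11 : Summable (fun k : ℤ => a (k - 1) * a (k - 1)) :=
  summable_prod hc hl0 hl1 hd 1 1

lemma S12 : Summable (fun k : ℤ => a (k - 1) * a (k - 2)) :=
  summable_prod hc hl0 hl1 hd 1 2

lemma S22 : Summable (fun k : ℤ => a (k - 2) * a (k - 2)) :=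
  summable_prod hc hl0 hl1 hd 2 2

lemma E1 : ∑' k : ℤ, (a k - a (k - 1)) ^ 2 = 2 * Sz a - 2 * So a := by
  have h : ∑' k : ℤ, (a k - a (k - 1)) ^ 2
      = ∑' k : ℤ, (1 * (a k * a k) + ((-2) * (a k * a (k - 1)) + 1 * (a (k - 1) * a (k - 1)))) :=
    tsum_congr fun k => by ring
  rw [h, tsum_comb3 _ _ _ (S00 hc hl0 hl1 hd) (S01 hc hl0 hl1 hd) (S11 hc hl0 hl1 hd),
    T11]
  unfold Sz So
  ring

lemma E2 : ∑' k : ℤ, (a k - a (k - 1)) * (a (k - 1) - a (k - 2))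
    = 2 * So a - Sz a - St a := by
  have h : ∑' k : ℤ, (a k - a (k - 1)) * (a (k - 1) - a (k - 2))
      = ∑' k : ℤ, (1 * (a k * a (k - 1)) + ((-1) * (a k * a (k - 2))
        + ((-1) * (a (k - 1) * a (k - 1)) + (1 * (a (k - 1) * a (k - 2))
        + (0 * (a k * a k) + 0 * (a (k - 2) * a (k - 2))))))) :=
    tsum_congr fun k => by ring
  rw [h, tsum_comb6 _ _ _ _ _ _ (S01 hc hl0 hl1 hd) (S02 hc hl0 hl1 hd) (S11 hc hl0 hl1 hd)
    (S12 hc hl0 hl1 hd) (S00 hc hl0 hl1 hd) (S22 hc hl0 hl1 hd), T11, T12]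
  unfold Sz So St
  ring

lemma E3 : ∑' k : ℤ, (a k + a (k - 1)) ^ 2 = 2 * Sz a + 2 * So a := by
  have h : ∑' k : ℤ, (a k + a (k - 1)) ^ 2
      = ∑' k : ℤ, (1 * (a k * a k) + (2 * (a k * a (k - 1)) + 1 * (a (k - 1) * a (k - 1)))) :=
    tsum_congr fun k => by ring
  rw [h, tsum_comb3 _ _ _ (S00 hc hl0 hl1 hd) (S01 hc hl0 hl1 hd) (S11 hc hl0 hl1 hd),
    T11]
  unfold Sz So
  ring

lemma E4 : ∑' k : ℤ, (a k - 2 * a (k - 1) + a (k - 2)) ^ 2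
    = 6 * Sz a - 8 * So a + 2 * St a := by
  have h : ∑' k : ℤ, (a k - 2 * a (k - 1) + a (k - 2)) ^ 2
      = ∑' k : ℤ, (1 * (a k * a k) + (4 * (a (k - 1) * a (k - 1))
        + (1 * (a (k - 2) * a (k - 2)) + ((-4) * (a k * a (k - 1))
        + (2 * (a k * a (k - 2)) + (-4) * (a (k - 1) * a (k - 2))))))) :=
    tsum_congr fun k => by ring
  rw [h, tsum_comb6 _ _ _ _ _ _ (S00 hc hl0 hl1 hd) (S11 hc hl0 hl1 hd) (S22 hc hl0 hl1 hd)
    (S01 hc hl0 hl1 hd) (S02 hc hl0 hl1 hd) (S12 hc hl0 hl1 hd), T11, T22, T12]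
  unfold Sz So St
  ring

lemma expand_main (A B C : ℝ) :
    ∑' j : ℤ, (a j * A + a (j - 1) * B + a (j - 2) * C) ^ 2
      = (A * A + B * B + C * C) * Sz a + (2 * (A * B) + 2 * (B * C)) * So a
        + 2 * (A * C) * St a := by
  have h : ∑' j : ℤ, (a j * A + a (j - 1) * B + a (j - 2) * C) ^ 2
      = ∑' k : ℤ, ((A * A) * (a k * a k) + ((B * B) * (a (k - 1) * a (k - 1))
        + ((C * C) * (a (k - 2) * a (k - 2)) + ((2 * (A * B)) * (a k * a (k - 1))
        + ((2 * (A * C)) * (a k * a (k - 2)) + (2 * (B * C)) * (a (k - 1) * a (k - 2))))))) :=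
    tsum_congr fun k => by ring
  rw [h, tsum_comb6 _ _ _ _ _ _ (S00 hc hl0 hl1 hd) (S11 hc hl0 hl1 hd) (S22 hc hl0 hl1 hd)
    (S01 hc hl0 hl1 hd) (S02 hc hl0 hl1 hd) (S12 hc hl0 hl1 hd), T11, T22, T12]
  unfold Sz So St
  ring

lemma sigma_formula (t : ℝ) :
    sigma3sq a t = (19 * Sz a + 12 * So a + St a) / 32
      - ((3 * Sz a - 4 * So a + St a) / 2)
        * ((Int.fract t - 1 / 2) ^ 2 * (1 / 2 - (Int.fract t - 1 / 2) ^ 2)) := by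
  rw [sigma3_eq, expand_main hc hl0 hl1 hd,
    N3_val0 (Int.fract_nonneg t) (Int.fract_lt_one t),
    N3_val1 (Int.fract_nonneg t) (Int.fract_lt_one t),
    N3_val2 (Int.fract_nonneg t) (Int.fract_lt_one t)]
  ring

omit hc hl0 hl1 hd

lemma const_of_step (f : ℤ → ℝ) (h : ∀ k : ℤ, f k = f (k - 1)) : ∀ k : ℤ, f k = f 0 := by
  intro k
  induction k using Int.induction_on with
  | zero => rfl
  | succ n ih =>
    rw [h ((n : ℤ) + 1), show ((n : ℤ) + 1 - 1 : ℤ) = (n : ℤ) by ring]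
    exact ih
  | pred n ih =>
    rw [← h (-(n : ℤ))]
    exact ih

lemma zero_of_summable_const (f : ℤ → ℝ) (hs : Summable f) (h : ∀ k : ℤ, f k = f 0) :
    ∀ k : ℤ, f k = 0 := by
  intro k
  have h1 := hs.tendsto_cofinite_zero
  have h2 : Filter.Tendsto f Filter.cofinite (nhds (f 0)) := by
    rw [show f = fun _ => f 0 from funext h]
    exact tendsto_const_nhds
  rw [h k, tendsto_nhds_unique h2 h1]

lemma exists_sd (ha : Summable a) (hne : ∃ k : ℤ, a k ≠ 0) :
    ∃ k : ℤ, a k - 2 * a (k - 1) + a (k - 2) ≠ 0 := by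
  by_contra hcon
  push_neg at hcon
  set b : ℤ → ℝ := fun k => a k - a (k - 1) with hb
  have hstep : ∀ k : ℤ, b k = b (k - 1) := by
    intro k
    have h := hcon k
    simp only [hb]
    rw [show k - 1 - 1 = k - 2 by ring]
    linarith
  have hsb : Summable b := ha.sub ((Equiv.subRight 1).summable_iff.mpr ha)
  have hb0 : ∀ k : ℤ, b k = 0 := zero_of_summable_const b hsb (const_of_step b hstep)
  have hastep : ∀ k : ℤ, a k = a (k - 1) := by
    intro k
    have := hb0 k
    simp only [hb] at this
    linarith
  have ha0 : ∀ k : ℤ, a k = 0 := zero_of_summable_const a ha (const_of_step a hastep)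
  obtain ⟨k, hk⟩ := hne
  exact hk (ha0 k)

include hc hl0 hl1 hd

lemma M_pos (hne : ∃ k : ℤ, a k ≠ 0) : 0 < 3 * Sz a - 4 * So a + St a := by
  have h4 := E4 hc hl0 hl1 hd
  have hsum : Summable (fun k : ℤ => (a k - 2 * a (k - 1) + a (k - 2)) ^ 2) := by
    have heq : (fun k : ℤ => (a k - 2 * a (k - 1) + a (k - 2)) ^ 2)
        = fun k : ℤ => 1 * (a k * a k) + (4 * (a (k - 1) * a (k - 1))
          + (1 * (a (k - 2) * a (k - 2)) + ((-4) * (a k * a (k - 1))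
          + (2 * (a k * a (k - 2)) + (-4) * (a (k - 1) * a (k - 2)))))) :=
      funext fun k => by ring
    rw [heq]
    exact ((S00 hc hl0 hl1 hd).mul_left 1).add (((S11 hc hl0 hl1 hd).mul_left 4).add
      (((S22 hc hl0 hl1 hd).mul_left 1).add (((S01 hc hl0 hl1 hd).mul_left (-4)).add
      (((S02 hc hl0 hl1 hd).mul_left 2).add ((S12 hc hl0 hl1 hd).mul_left (-4))))))
  obtain ⟨k0, hk0⟩ := exists_sd (summable_a hc hl0 hl1 hd) hne
  have hpos : 0 < ∑' k : ℤ, (a k - 2 * a (k - 1) + a (k - 2)) ^ 2 :=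
    Summable.tsum_pos hsum (fun k => sq_nonneg _) k0 (sq_pos_of_ne_zero hk0)
  linarith

end Series

/-- for an exponentially decaying, not identically zero `a : ℤ → ℝ`,
the function `σ₃²` attains its absolute maximum over `ℝ` exactly at the half-integers
`l + 1/2`, `l ∈ ℤ`, with maximal value `M/32 + (1/4) Σ_k (a_k + a_{k−1})²`, where
`M = Σ_k (a_k − a_{k−1})² − Σ_k (a_k − a_{k−1})(a_{k−1} − a_{k−2})`. -/
theorem sigma3sq_max_at_half_integers (a : ℤ → ℝ) (c lam : ℝ)
    (hc : 0 < c) (hlam0 : 0 < lam) (hlam1 : lam < 1)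
    (hdecay : ∀ k : ℤ, |a k| ≤ c * lam ^ k.natAbs)
    (hne : ∃ k : ℤ, a k ≠ 0)
    (M : ℝ)
    (hM : M = (∑' k : ℤ, (a k - a (k - 1)) ^ 2) -
        ∑' k : ℤ, (a k - a (k - 1)) * (a (k - 1) - a (k - 2))) :
    (∀ t : ℝ, sigma3sq a t ≤ M / 32 + (1 / 4) * ∑' k : ℤ, (a k + a (k - 1)) ^ 2) ∧
    (∀ l : ℤ, sigma3sq a ((l : ℝ) + 1 / 2) =
        M / 32 + (1 / 4) * ∑' k : ℤ, (a k + a (k - 1)) ^ 2) ∧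
    (∀ t : ℝ, sigma3sq a t = M / 32 + (1 / 4) * ∑' k : ℤ, (a k + a (k - 1)) ^ 2 →
        ∃ l : ℤ, t = (l : ℝ) + 1 / 2) := by
  have hMval : M = 3 * Sz a - 4 * So a + St a := by
    rw [hM, E1 hc hlam0 hlam1 hdecay, E2 hc hlam0 hlam1 hdecay]
    ring
  have hV : M / 32 + (1 / 4) * ∑' k : ℤ, (a k + a (k - 1)) ^ 2
      = (19 * Sz a + 12 * So a + St a) / 32 := by
    rw [hMval, E3 hc hlam0 hlam1 hdecay]
    ring
  have hMpos : 0 < 3 * Sz a - 4 * So a + St a := M_pos hc hlam0 hlam1 hdecay hne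
  refine ⟨?_, ?_, ?_⟩
  · intro t
    rw [hV, sigma_formula hc hlam0 hlam1 hdecay t]
    have h0 : 0 ≤ Int.fract t := Int.fract_nonneg t
    have h1 : Int.fract t < 1 := Int.fract_lt_one t
    have hv2 : (Int.fract t - 1 / 2) ^ 2 ≤ 1 / 4 := by nlinarith
    have hw : 0 ≤ (Int.fract t - 1 / 2) ^ 2 * (1 / 2 - (Int.fract t - 1 / 2) ^ 2) :=
      mul_nonneg (sq_nonneg _) (by linarith)
    nlinarith [mul_nonneg hMpos.le hw]
  · intro l
    rw [hV, sigma_formula hc hlam0 hlam1 hdecay]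
    rw [show Int.fract ((l : ℝ) + 1 / 2) = 1 / 2 by
      rw [Int.fract_intCast_add]
      exact Int.fract_eq_self.mpr ⟨by norm_num, by norm_num⟩]
    ring
  · intro t ht
    rw [hV, sigma_formula hc hlam0 hlam1 hdecay t] at ht
    have h0 : 0 ≤ Int.fract t := Int.fract_nonneg t
    have h1 : Int.fract t < 1 := Int.fract_lt_one t
    have hv2 : (Int.fract t - 1 / 2) ^ 2 ≤ 1 / 4 := by nlinarith
    have hprod : (3 * Sz a - 4 * So a + St a) / 2
        * ((Int.fract t - 1 / 2) ^ 2 * (1 / 2 - (Int.fract t - 1 / 2) ^ 2)) = 0 := by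
      linarith
    have hw0 : (Int.fract t - 1 / 2) ^ 2 * (1 / 2 - (Int.fract t - 1 / 2) ^ 2) = 0 :=
      (mul_eq_zero.mp hprod).resolve_left (by positivity)
    have hvz : Int.fract t - 1 / 2 = 0 := by
      rcases mul_eq_zero.mp hw0 with h | h
      · exact (pow_eq_zero_iff (two_ne_zero)).mp h
      · nlinarith
    refine ⟨⌊t⌋, ?_⟩
    have h2 := Int.floor_add_fract t
    linarith

end
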